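/- arXiv:0712.2401 — 3 statements merged into one kernel-verified Lean document; each statement's English description precedes it below -/
import Mathlib

section
/- Let $f, g : \mathbb{R}^d \to [0,\infty)$ be integrable, spherically symmetric (i.e., depending only on $|x|$) and radially nonincreasing. Then the convolution $f * g$ attains its supremum at the origin: for all $\lambda' \in \mathbb{R}^d$, $\int f(\lambda' - \lambda) g(\lambda)\, d\lambda \le \int f(\lambda) g(\lambda)\, d\lambda$. -/
/-!
By the layer cake formula, `∫ F G = ∫₀^∞ (∫_{F > t} G) dt` for nonnegative `F`, `G`. The
superlevel sets of radially nonincreasing functions are centred balls, so those of `f` and `g` are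
nested, and translating `f` does not change the measure of its superlevel sets. Among sets of a
given measure, one nested with every superlevel set of `g` carries the largest integral of `g`
(bathtub principle), so `∫_{f(a - ·) > t} g ≤ ∫_{f > t} g` for every `t`.
-/

open MeasureTheory Set

def RadiallyAntitone {E β : Type*} [Norm E] [Preorder β] (f : E → β) : Prop :=
  ∀ x y, ‖x‖ ≤ ‖y‖ → f y ≤ f x

namespace RadiallyAntitone

theorem superlevel_subset_or {E β : Type*} [Norm E] [LinearOrder β] {f g : E → β}
    (hf : RadiallyAntitone f) (hg : RadiallyAntitone g) (t s : β) :
    {x | t < f x} ⊆ {x | s < g x} ∨ {x | s < g x} ⊆ {x | t < f x} := by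
  by_contra! h
  obtain ⟨⟨a, ha, ha'⟩, ⟨b, hb, hb'⟩⟩ := And.imp not_subset.mp not_subset.mp h
  rcases le_total ‖a‖ ‖b‖ with hab | hba
  · exact (hg a b hab).not_gt ((not_lt.mp ha').trans_lt hb)
  · exact (hf b a hba).not_gt ((not_lt.mp hb').trans_lt ha)

theorem measurable {E : Type*} [NormedAddCommGroup E] [NormedSpace ℝ E] [MeasurableSpace E]
    [BorelSpace E] {f : E → ℝ} (hf : RadiallyAntitone f) : Measurable f := by
  rcases subsingleton_or_nontrivial E with hE | hE
  · exact Subsingleton.measurable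
  obtain ⟨u, hu⟩ := exists_norm_eq E zero_le_one
  have hnorm (r : ℝ) : ‖max r 0 • u‖ = max r 0 := by
    rw [norm_smul, hu, mul_one, Real.norm_of_nonneg (le_max_right _ _)]
  have hprofile : Antitone fun r : ℝ => f (max r 0 • u) := fun r r' hrr' =>
    hf _ _ (by rw [hnorm, hnorm]; exact max_le_max hrr' le_rfl)
  have hfactor : f = (fun r : ℝ => f (max r 0 • u)) ∘ norm := by
    funext x
    have hx : ‖max ‖x‖ 0 • u‖ = ‖x‖ := by rw [hnorm, max_eq_left (norm_nonneg x)]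
    exact le_antisymm (hf _ _ hx.le) (hf _ _ hx.ge)
  rw [hfactor]
  exact hprofile.measurable.comp measurable_norm

end RadiallyAntitone

section LayerCake

variable {α : Type*} [MeasurableSpace α] {μ : Measure α}

theorem lintegral_ofReal_mul_eq_lintegral_setLIntegral_lt {F G : α → ℝ} (hF0 : 0 ≤ F)
    (hF : Measurable F) (hG : Measurable G) :
    ∫⁻ x, ENNReal.ofReal (F x) * ENNReal.ofReal (G x) ∂μ
      = ∫⁻ t in Ioi 0, ∫⁻ x in {x | t < F x}, ENNReal.ofReal (G x) ∂μ := by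
  have hG' : Measurable fun x => ENNReal.ofReal (G x) := hG.ennreal_ofReal
  calc ∫⁻ x, ENNReal.ofReal (F x) * ENNReal.ofReal (G x) ∂μ
      = ∫⁻ x, ENNReal.ofReal (F x) ∂μ.withDensity fun x => ENNReal.ofReal (G x) := by
        rw [lintegral_withDensity_eq_lintegral_mul μ hG' hF.ennreal_ofReal]
        simp only [Pi.mul_apply, mul_comm]
    _ = ∫⁻ t in Ioi 0, ∫⁻ x in {x | t < F x}, ENNReal.ofReal (G x) ∂μ := by
        rw [lintegral_eq_lintegral_meas_lt _ (.of_forall hF0) hF.aemeasurable]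
        simp only [withDensity_apply _ (measurableSet_lt measurable_const hF)]

/-- Bathtub principle. -/
theorem setLIntegral_ofReal_le_of_superlevel_subset_or {A A' : Set α} {G : α → ℝ} (hG0 : 0 ≤ G)
    (hG : Measurable G) (hA : ∀ s, A ⊆ {x | s < G x} ∨ {x | s < G x} ⊆ A) (hμ : μ A' ≤ μ A) :
    ∫⁻ x in A', ENNReal.ofReal (G x) ∂μ ≤ ∫⁻ x in A, ENNReal.ofReal (G x) ∂μ := by
  rw [lintegral_eq_lintegral_meas_lt _ (.of_forall hG0) hG.aemeasurable,
    lintegral_eq_lintegral_meas_lt _ (.of_forall hG0) hG.aemeasurable]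
  refine lintegral_mono fun s => ?_
  rw [Measure.restrict_apply (measurableSet_lt measurable_const hG),
    Measure.restrict_apply (measurableSet_lt measurable_const hG)]
  rcases hA s with h | h
  · rw [inter_eq_right.mpr h]
    exact (measure_mono inter_subset_right).trans hμ
  · rw [inter_eq_left.mpr h]
    exact measure_mono inter_subset_left

theorem lintegral_ofReal_mul_le_of_superlevel_subset_or {F F' G : α → ℝ} (hF0 : 0 ≤ F)
    (hF'0 : 0 ≤ F') (hG0 : 0 ≤ G) (hF : Measurable F) (hF' : Measurable F') (hG : Measurable G)
    (hμ : ∀ t, μ {x | t < F' x} ≤ μ {x | t < F x})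
    (hFG : ∀ t s, {x | t < F x} ⊆ {x | s < G x} ∨ {x | s < G x} ⊆ {x | t < F x}) :
    ∫⁻ x, ENNReal.ofReal (F' x) * ENNReal.ofReal (G x) ∂μ
      ≤ ∫⁻ x, ENNReal.ofReal (F x) * ENNReal.ofReal (G x) ∂μ := by
  rw [lintegral_ofReal_mul_eq_lintegral_setLIntegral_lt hF'0 hF' hG,
    lintegral_ofReal_mul_eq_lintegral_setLIntegral_lt hF0 hF hG]
  exact lintegral_mono fun t =>
    setLIntegral_ofReal_le_of_superlevel_subset_or hG0 hG (hFG t) (hμ t)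

end LayerCake

theorem RadiallyAntitone.integral_comp_sub_mul_le {E : Type*} [NormedAddCommGroup E]
    [NormedSpace ℝ E] [MeasurableSpace E] [BorelSpace E] {μ : Measure E} [μ.IsAddLeftInvariant]
    [μ.IsNegInvariant] {f g : E → ℝ} (hf0 : 0 ≤ f) (hg0 : 0 ≤ g) (hfi : Integrable f μ)
    (hf : RadiallyAntitone f) (hg : RadiallyAntitone g) (a : E) :
    ∫ x, f (a - x) * g x ∂μ ≤ ∫ x, f x * g x ∂μ := by
  have hfm := hf.measurable
  have hgm := hg.measurable
  have hfam : Measurable fun x => f (a - x) := hfm.comp (measurable_id.const_sub a)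
  have htranslate (t : ℝ) : μ {x | t < f (a - x)} = μ {x | t < f x} :=
    (Measure.measurePreserving_sub_left μ a).measure_preimage
      (measurableSet_lt measurable_const hfm).nullMeasurableSet
  have hlintegral := lintegral_ofReal_mul_le_of_superlevel_subset_or
    (F' := fun x => f (a - x)) hf0 (fun x => hf0 (a - x)) hg0 hfm hfam hgm
    (fun t => (htranslate t).le) (hf.superlevel_subset_or hg)
  -- `g` is bounded by `g 0`, so `f * g` is integrable.
  have hint : Integrable (fun x => f x * g x) μ :=
    hfi.mul_bdd hgm.aestronglyMeasurable (.of_forall fun x => by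
      rw [Real.norm_of_nonneg (hg0 x)]; exact hg 0 x (by simp))
  rw [integral_eq_lintegral_of_nonneg_ae (.of_forall fun x => mul_nonneg (hf0 _) (hg0 x))
      (hfam.mul hgm).aestronglyMeasurable,
    integral_eq_lintegral_of_nonneg_ae (.of_forall fun x => mul_nonneg (hf0 x) (hg0 x))
      hint.aestronglyMeasurable]
  have hfinite := hint.lintegral_lt_top.ne
  simp only [ENNReal.ofReal_mul (hf0 _)] at hfinite ⊢
  exact ENNReal.toReal_mono hfinite hlintegral

theorem stmt_2_general (d : ℕ) (f g : EuclideanSpace ℝ (Fin d) → ℝ)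
    (hf0 : ∀ x, 0 ≤ f x) (hg0 : ∀ x, 0 ≤ g x)
    (hfi : Integrable f)
    (hfrad : ∀ x y : EuclideanSpace ℝ (Fin d), ‖x‖ ≤ ‖y‖ → f y ≤ f x)
    (hgrad : ∀ x y : EuclideanSpace ℝ (Fin d), ‖x‖ ≤ ‖y‖ → g y ≤ g x)
    (l' : EuclideanSpace ℝ (Fin d)) :
    ∫ l, f (l' - l) * g l ≤ ∫ l, f l * g l :=
  RadiallyAntitone.integral_comp_sub_mul_le hf0 hg0 hfi hfrad hgrad l'

theorem stmt_2 (d : ℕ) (f g : EuclideanSpace ℝ (Fin d) → ℝ)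
    (hf0 : ∀ x, 0 ≤ f x) (hg0 : ∀ x, 0 ≤ g x)
    (hfi : Integrable f) (hgi : Integrable g)
    (hfrad : ∀ x y : EuclideanSpace ℝ (Fin d), ‖x‖ ≤ ‖y‖ → f y ≤ f x)
    (hgrad : ∀ x y : EuclideanSpace ℝ (Fin d), ‖x‖ ≤ ‖y‖ → g y ≤ g x)
    (l' : EuclideanSpace ℝ (Fin d)) :
    ∫ l, f (l' - l) * g l ≤ ∫ l, f l * g l :=
  stmt_2_general d f g hf0 hg0 hfi hfrad hgrad l'
end

section
/- Let $\mathcal{H}$ be a Hilbert space and let $L, \tilde{L} : \mathcal{H} \to [0,\infty]$ be positively homogeneous of order 2 (i.e., $L(\lambda f) = \lambda^2 L(f)$ for $\lambda \in \mathbb{R}$). For $\theta > 0$ define $\Lambda(\theta) = \sup_{\|f\|=1} (\theta L(f) - \tilde{L}(f))$ and assume $\Lambda$ is continuous and finite. Let $J = \sup_{\|f\|^2 + \tilde{L}(f) = 1} L(f)$ and assume $0 < J < \infty$. Then $\Lambda(1/J) = 1$. -/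
theorem stmt_8 {H : Type*} [NormedAddCommGroup H] [InnerProductSpace ℝ H] [Nontrivial H]
    (L Lt : H → ℝ) (hL0 : ∀ f, 0 ≤ L f) (hLt0 : ∀ f, 0 ≤ Lt f)
    (hLhom : ∀ (c : ℝ) (f : H), L (c • f) = c ^ 2 * L f)
    (hLthom : ∀ (c : ℝ) (f : H), Lt (c • f) = c ^ 2 * Lt f)
    (Lam : ℝ → ℝ)
    (hLam : ∀ θ, 0 < θ → Lam θ = sSup {y | ∃ f : H, ‖f‖ = 1 ∧ y = θ * L f - Lt f})
    (hbdd : ∀ θ, 0 < θ → BddAbove {y | ∃ f : H, ‖f‖ = 1 ∧ y = θ * L f - Lt f})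
    (hcont : ContinuousOn Lam (Set.Ioi 0))
    (J : ℝ) (hJ : J = sSup {y | ∃ f : H, ‖f‖ ^ 2 + Lt f = 1 ∧ y = L f})
    (hJbdd : BddAbove {y | ∃ f : H, ‖f‖ ^ 2 + Lt f = 1 ∧ y = L f})
    (hJpos : 0 < J) :
    Lam (1 / J) = 1 := by
  have hJ0 : (0:ℝ) < 1 / J := by positivity
  have hL00 : L 0 = 0 := by simpa using hLhom 0 0
  -- scaling: from a unit vector we get an element of the J-set
  have hscale : ∀ f : H, ‖f‖ = 1 →
      ((1 + Lt f)⁻¹ * L f) ∈ {y | ∃ g : H, ‖g‖ ^ 2 + Lt g = 1 ∧ y = L g} := by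
    intro f hf
    have hpos : (0:ℝ) < 1 + Lt f := by have := hLt0 f; linarith
    set t : ℝ := Real.sqrt (1 + Lt f)⁻¹ with ht
    have ht2 : t ^ 2 = (1 + Lt f)⁻¹ := Real.sq_sqrt (by positivity)
    refine ⟨t • f, ?_, ?_⟩
    · rw [norm_smul, hf, mul_one, hLthom, Real.norm_eq_abs, sq_abs, ht2]
      field_simp
    · rw [hLhom, ht2]
  -- the J-set is nonempty
  obtain ⟨x, hx⟩ := exists_ne (0 : H)
  have hux : ‖‖x‖⁻¹ • x‖ = 1 := by
    rw [norm_smul, Real.norm_eq_abs, abs_inv, abs_norm,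
      inv_mul_cancel₀ (norm_ne_zero_iff.mpr hx)]
  have hne : Set.Nonempty {y | ∃ g : H, ‖g‖ ^ 2 + Lt g = 1 ∧ y = L g} :=
    ⟨_, hscale _ hux⟩
  -- upper bound: Lam (1/J) ≤ 1
  have hub : Lam (1 / J) ≤ 1 := by
    rw [hLam _ hJ0]
    apply Real.sSup_le _ zero_le_one
    rintro y ⟨f, hf, rfl⟩
    have hpos : (0:ℝ) < 1 + Lt f := by have := hLt0 f; linarith
    have h := le_csSup hJbdd (hscale f hf)
    rw [← hJ] at h
    -- h : (1 + Lt f)⁻¹ * L f ≤ J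
    have h2 : L f ≤ (1 + Lt f) * J := by
      rw [← inv_mul_le_iff₀ hpos]; exact h
    have h3 : (1 / J) * L f ≤ (1 / J) * ((1 + Lt f) * J) :=
      mul_le_mul_of_nonneg_left h2 hJ0.le
    have h4 : (1 / J) * ((1 + Lt f) * J) = 1 + Lt f := by
      field_simp
    rw [h4] at h3
    linarith
  -- lower bound: for θ > 1/J, Lam θ ≥ 1
  have hlb : ∀ θ : ℝ, 1 / J < θ → 1 ≤ Lam θ := by
    intro θ hθ
    have hθ0 : 0 < θ := lt_trans hJ0 hθ
    have h1θ : 1 / θ < J := by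
      rw [div_lt_iff₀ hθ0]
      rw [div_lt_iff₀ hJpos] at hθ
      nlinarith
    obtain ⟨y, ⟨g, hg, rfl⟩, hy⟩ := exists_lt_of_lt_csSup hne (hJ ▸ h1θ)
    have hLg : 1 < θ * L g := by
      rw [div_lt_iff₀ hθ0] at hy; nlinarith
    have hg0 : g ≠ 0 := by
      rintro rfl
      rw [hL00] at hLg; linarith
    have hs : (0:ℝ) < ‖g‖ := norm_pos_iff.mpr hg0
    set f : H := ‖g‖⁻¹ • g with hfdef
    have hf1 : ‖f‖ = 1 := by
      rw [hfdef, norm_smul, Real.norm_eq_abs, abs_inv, abs_norm,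
        inv_mul_cancel₀ hs.ne']
    have hmem : (θ * L f - Lt f) ∈ {y | ∃ f : H, ‖f‖ = 1 ∧ y = θ * L f - Lt f} :=
      ⟨f, hf1, rfl⟩
    have hle := le_csSup (hbdd θ hθ0) hmem
    rw [← hLam θ hθ0] at hle
    have hval : 1 ≤ θ * L f - Lt f := by
      rw [hfdef, hLhom, hLthom]
      have hinv : (0:ℝ) < (‖g‖⁻¹) ^ 2 := by positivity
      have hmul : (‖g‖⁻¹) ^ 2 * ‖g‖ ^ 2 = 1 := by
        field_simp
      nlinarith [mul_pos hinv (by linarith : (0:ℝ) < θ * L g - Lt g - ‖g‖ ^ 2)]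
    linarith
  -- continuity gives 1 ≤ Lam (1/J)
  have hc : ContinuousWithinAt Lam (Set.Ioi 0) (1 / J) := hcont _ hJ0
  have ht : Filter.Tendsto Lam (nhdsWithin (1 / J) (Set.Ioi (1 / J)))
      (nhds (Lam (1 / J))) :=
    hc.tendsto.mono_left (nhdsWithin_mono _ (Set.Ioi_subset_Ioi hJ0.le))
  have hge : 1 ≤ Lam (1 / J) :=
    ge_of_tendsto ht (Filter.eventually_of_mem self_mem_nhdsWithin
      (fun x hx => hlb x hx))
  linarith
end

section
/- Let $Q : \mathbb{R}^d \to (0,1]$ be measurable with $Q^p$ integrable against $\varphi_{d-\sigma}$, where $\varphi_{d-\sigma}(\lambda) = C_{d,\sigma}|\lambda|^{-(d-\sigma)}$ and $0<\sigma<d$, and suppose $\varphi_{d-\sigma} Q^p$ has its convolution maximized at the origin in the sense that $\sup_{\lambda'} \int \varphi_{d-\sigma}(\lambda'-\lambda) Q^p(\lambda) d\lambda = \int \varphi_{d-\sigma}(\lambda) Q^p(\lambda) d\lambda$. Then for every $n \ge 1$, $\int_{(\mathbb{R}^d)^n} \Big[ \sum_{\pi \in \Sigma_n} \prod_{k=1}^n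 Q\Big(\sum_{j=1}^k \lambda_{\pi(j)}\Big) \Big]^p \prod_{i=1}^n \varphi_{d-\sigma}(\lambda_i)\, d\lambda_i \le (n!)^p \Big( \int_{\mathbb{R}^d} \varphi_{d-\sigma}(\lambda) Q^p(\lambda)\, d\lambda \Big)^n$. -/
open MeasureTheory

/-- The Riesz kernel `φ_{d-σ}(λ) = C_{d,σ} |λ|^{-(d-σ)}`. -/
noncomputable def rieszKernel (d : ℕ) (σ : ℝ) (l : EuclideanSpace ℝ (Fin d)) : ℝ :=
  Real.pi ^ (-(d : ℝ) / 2) * 2 ^ (-σ) * Real.Gamma (((d : ℝ) - σ) / 2) / Real.Gamma (σ / 2) *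
    ‖l‖ ^ (σ - (d : ℝ))

/-!
Jensen's inequality over the `n!` permutations gives `(∑_π a_π)^p ≤ (n!)^(p-1) ∑_π a_π^p`, and
relabelling the variables by `π` turns each term into the one of the identity permutation. For that
term, induction on `n`, uniformly in a shift `s`, gives
`∫ ∏_k Q(s + λ_1 + ⋯ + λ_k)^p ∏_i φ(λ_i) dλ ≤ I^n` with `I = ∫ φ Q^p`: once `λ_1` is fixed the
inner integral is the same one in `n - 1` variables with shift `s + λ_1`, and what remains is
`∫ φ(λ_1) Q(s + λ_1)^p dλ_1 = (φ * Q^p)(s) ≤ I`. Everything is done with lower Lebesgue integrals;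
the one Bochner integral that must be controlled is the convolution `(φ * Q^p)(s)`, which is finite
because `Q ≤ 1` near the singularity of `φ(s - ·)` and `φ(s - λ) ≤ 2^(d-σ) φ(λ)` away from it.
-/

open Finset
open scoped ENNReal

namespace Fin

theorem sum_Iic_zero {M : Type*} [AddCommMonoid M] {n : ℕ} (x : Fin (n + 1) → M) :
    ∑ j ∈ Iic 0, x j = x 0 := by
  rw [← bot_eq_zero, Finset.Iic_bot, sum_singleton]

theorem sum_Iic_succ {M : Type*} [AddCommMonoid M] {n : ℕ} (x : Fin (n + 1) → M) (k : Fin n) :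
    ∑ j ∈ Iic k.succ, x j = x 0 + ∑ j ∈ Iic k, x j.succ := by
  rw [← Finset.Icc_bot, bot_eq_zero, Icc_eq_cons_Ioc (Fin.zero_le _), Finset.sum_cons,
    ← Fin.map_succEmb_Iic, sum_map]
  rfl

end Fin

theorem ENNReal.pow_sum_le_card_pow_mul_sum_pow {ι : Type*} (s : Finset ι) (f : ι → ℝ≥0∞)
    {p : ℕ} (hp : 1 ≤ p) : (∑ i ∈ s, f i) ^ p ≤ (#s : ℝ≥0∞) ^ (p - 1) * ∑ i ∈ s, f i ^ p := by
  have h := ENNReal.rpow_sum_le_const_mul_sum_rpow s f (p := p) (by exact_mod_cast hp)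
  rw [← Nat.cast_one, ← Nat.cast_sub hp] at h
  simpa only [ENNReal.rpow_natCast] using h

theorem lintegral_comp_perm {ι E : Type*} [MeasurableSpace E] (μ : Measure E) [SigmaFinite μ]
    [Fintype ι] (π : Equiv.Perm ι) (f : (ι → E) → ℝ≥0∞) :
    ∫⁻ x, f (fun i => x (π i)) ∂Measure.pi (fun _ => μ) = ∫⁻ x, f x ∂Measure.pi (fun _ => μ) :=
  (measurePreserving_arrowCongr' (fun _ => μ) (fun _ => μ) π.symm (MeasurableEquiv.refl E)
    fun _ => MeasurePreserving.id μ).lintegral_comp_emb (MeasurableEquiv.measurableEmbedding _) f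

section IteratedConvolution

variable {E : Type*} [AddCommMonoid E] [MeasurableSpace E] [MeasurableAdd₂ E]
  {μ : Measure E} [SigmaFinite μ]

theorem lintegral_prod_partialSums_le {K w : E → ℝ≥0∞} (hK : Measurable K) (hw : Measurable w)
    {A : ℝ≥0∞} (hA : ∀ s, ∫⁻ x, K x * w (s + x) ∂μ ≤ A) (n : ℕ) (s : E) :
    ∫⁻ x, (∏ k, w (s + ∑ j ∈ Iic k, x j)) * ∏ i, K (x i) ∂Measure.pi (fun _ : Fin n => μ) ≤
      A ^ n := by
  induction n generalizing s with
  | zero => simp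
  | succ n ih =>
    have hsplit (a : E) (y : Fin n → E) :
        (∏ k, w (s + ∑ j ∈ Iic k, Fin.cons (α := fun _ => E) a y j)) *
            ∏ i, K (Fin.cons (α := fun _ => E) a y i) =
          K a * w (s + a) *
            ((∏ k, w (s + a + ∑ j ∈ Iic k, y j)) * ∏ i, K (y i)) := by
      simp only [Fin.prod_univ_succ, Fin.sum_Iic_succ, Fin.sum_Iic_zero, Fin.cons_zero,
        Fin.cons_succ, add_assoc]
      ring
    have hmeas (t : E) : Measurable fun y : Fin n → E =>
        (∏ k, w (t + ∑ j ∈ Iic k, y j)) * ∏ i, K (y i) := by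
      fun_prop
    calc ∫⁻ x, (∏ k, w (s + ∑ j ∈ Iic k, x j)) * ∏ i, K (x i) ∂Measure.pi (fun _ => μ)
        = ∫⁻ z : E × (Fin n → E), (∏ k, w (s + ∑ j ∈ Iic k, Fin.cons z.1 z.2 j)) *
            ∏ i, K (Fin.cons (α := fun _ => E) z.1 z.2 i) ∂μ.prod (Measure.pi fun _ => μ) := by
          rw [← ((measurePreserving_piFinSuccAbove (fun _ => μ) 0).symm).lintegral_comp_emb
            (MeasurableEquiv.measurableEmbedding _)]
          simp only [MeasurableEquiv.piFinSuccAbove_symm_apply, Fin.insertNthEquiv_zero,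
            Fin.consEquiv_apply]
      _ ≤ ∫⁻ a, ∫⁻ y, K a * w (s + a) * ((∏ k, w (s + a + ∑ j ∈ Iic k, y j)) * ∏ i, K (y i))
            ∂Measure.pi (fun _ => μ) ∂μ := by
          simpa only [hsplit] using lintegral_prod_le _
      _ ≤ ∫⁻ a, K a * w (s + a) * A ^ n ∂μ := by
          gcongr with a
          rw [lintegral_const_mul _ (hmeas _)]
          gcongr
          exact ih _
      _ ≤ A * A ^ n := by
          rw [lintegral_mul_const _ (by fun_prop)]
          gcongr
          exact hA s
      _ = A ^ (n + 1) := (pow_succ' A n).symm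

theorem lintegral_sum_perm_pow_le {K w : E → ℝ≥0∞} (hK : Measurable K) (hw : Measurable w)
    {p : ℕ} (hp : 1 ≤ p) {A : ℝ≥0∞} (hA : ∀ s, ∫⁻ x, K x * w (s + x) ^ p ∂μ ≤ A) (n : ℕ) :
    ∫⁻ x, (∑ π : Equiv.Perm (Fin n), ∏ k, w (∑ j ∈ Iic k, x (π j))) ^ p * ∏ i, K (x i)
        ∂Measure.pi (fun _ => μ) ≤ (n.factorial : ℝ≥0∞) ^ p * A ^ n := by
  have hterm (π : Equiv.Perm (Fin n)) :
      ∫⁻ x, (∏ k, w (∑ j ∈ Iic k, x (π j))) ^ p * ∏ i, K (x i) ∂Measure.pi (fun _ => μ) ≤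
        A ^ n := by
    have h := lintegral_prod_partialSums_le hK (hw.pow_const p) hA n 0
    simp only [zero_add] at h
    rw [← lintegral_comp_perm μ π] at h
    have hK_perm : ∀ x : Fin n → E, ∏ i, K (x (π i)) = ∏ i, K (x i) :=
      fun x => Equiv.prod_comp π fun i => K (x i)
    simpa only [prod_pow, hK_perm] using h
  calc ∫⁻ x, (∑ π : Equiv.Perm (Fin n), ∏ k, w (∑ j ∈ Iic k, x (π j))) ^ p * ∏ i, K (x i)
        ∂Measure.pi (fun _ => μ)
      ≤ ∫⁻ x, (n.factorial : ℝ≥0∞) ^ (p - 1) *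
          ∑ π : Equiv.Perm (Fin n), (∏ k, w (∑ j ∈ Iic k, x (π j))) ^ p * ∏ i, K (x i)
          ∂Measure.pi (fun _ => μ) := by
        refine lintegral_mono fun x => ?_
        rw [← sum_mul, ← mul_assoc]
        have hJensen := ENNReal.pow_sum_le_card_pow_mul_sum_pow univ
          (fun π : Equiv.Perm (Fin n) => ∏ k, w (∑ j ∈ Iic k, x (π j))) hp
        rw [card_univ, Fintype.card_perm, Fintype.card_fin] at hJensen
        gcongr
    _ = (n.factorial : ℝ≥0∞) ^ (p - 1) * ∑ π : Equiv.Perm (Fin n),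
          ∫⁻ x, (∏ k, w (∑ j ∈ Iic k, x (π j))) ^ p * ∏ i, K (x i) ∂Measure.pi (fun _ => μ) := by
        rw [lintegral_const_mul _ (by fun_prop), lintegral_finsetSum _ (by fun_prop)]
    _ ≤ (n.factorial : ℝ≥0∞) ^ (p - 1) * ∑ _π : Equiv.Perm (Fin n), A ^ n := by
        gcongr with π
        exact hterm π
    _ = (n.factorial : ℝ≥0∞) ^ p * A ^ n := by
        rw [sum_const, card_univ, Fintype.card_perm, Fintype.card_fin, nsmul_eq_mul, ← mul_assoc,
          pow_sub_one_mul (by omega)]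

theorem integral_sum_perm_pow_le {K w : E → ℝ} (hK : Measurable K) (hw : Measurable w)
    (hK0 : ∀ x, 0 ≤ K x) (hw0 : ∀ x, 0 ≤ w x) {p : ℕ} (hp : 1 ≤ p) {A : ℝ} (hA0 : 0 ≤ A)
    (hA : ∀ s, ∫⁻ x, ENNReal.ofReal (K x) * ENNReal.ofReal (w (s + x)) ^ p ∂μ ≤
      ENNReal.ofReal A) (n : ℕ) :
    ∫ x, (∑ π : Equiv.Perm (Fin n), ∏ k, w (∑ j ∈ Iic k, x (π j))) ^ p * ∏ i, K (x i)
        ∂Measure.pi (fun _ => μ) ≤ (n.factorial : ℝ) ^ p * A ^ n := by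
  have hprod (x : Fin n → E) (π : Equiv.Perm (Fin n)) : 0 ≤ ∏ k, w (∑ j ∈ Iic k, x (π j)) :=
    prod_nonneg fun k _ => hw0 _
  have hsum (x : Fin n → E) : 0 ≤ ∑ π : Equiv.Perm (Fin n), ∏ k, w (∑ j ∈ Iic k, x (π j)) :=
    sum_nonneg fun π _ => hprod x π
  have hF (x : Fin n → E) :
      0 ≤ (∑ π : Equiv.Perm (Fin n), ∏ k, w (∑ j ∈ Iic k, x (π j))) ^ p * ∏ i, K (x i) :=
    mul_nonneg (pow_nonneg (hsum x) p) (prod_nonneg fun i _ => hK0 _)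
  rw [integral_eq_lintegral_of_nonneg_ae (ae_of_all _ hF) (by fun_prop)]
  refine ENNReal.toReal_le_of_le_ofReal (by positivity) ?_
  convert lintegral_sum_perm_pow_le hK.ennreal_ofReal hw.ennreal_ofReal hp hA n using 1
  · congr with x
    rw [ENNReal.ofReal_mul (pow_nonneg (hsum x) p), ENNReal.ofReal_pow (hsum x),
      ENNReal.ofReal_sum_of_nonneg fun π _ => hprod x π,
      ENNReal.ofReal_prod_of_nonneg fun i _ => hK0 _]
    simp_rw [ENNReal.ofReal_prod_of_nonneg fun k _ => hw0 _]
  · rw [ENNReal.ofReal_mul (by positivity), ENNReal.ofReal_pow (by positivity),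
      ENNReal.ofReal_pow hA0, ENNReal.ofReal_natCast]

end IteratedConvolution

section RieszKernel

variable {d : ℕ} {σ : ℝ}

theorem rieszKernel_const_nonneg (hσ0 : 0 < σ) (hσd : σ < d) :
    0 ≤ Real.pi ^ (-(d : ℝ) / 2) * 2 ^ (-σ) * Real.Gamma (((d : ℝ) - σ) / 2) /
      Real.Gamma (σ / 2) := by
  have := Real.Gamma_pos_of_pos (show 0 < ((d : ℝ) - σ) / 2 by linarith)
  have := Real.Gamma_pos_of_pos (show 0 < σ / 2 by linarith)
  positivity

theorem rieszKernel_nonneg (hσ0 : 0 < σ) (hσd : σ < d) (l : EuclideanSpace ℝ (Fin d)) :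
    0 ≤ rieszKernel d σ l :=
  mul_nonneg (rieszKernel_const_nonneg hσ0 hσd) (by positivity)

@[fun_prop]
theorem measurable_rieszKernel : Measurable (rieszKernel d σ) := by
  unfold rieszKernel
  fun_prop

theorem rieszKernel_sub_comm (a b : EuclideanSpace ℝ (Fin d)) :
    rieszKernel d σ (a - b) = rieszKernel d σ (b - a) := by
  simp only [rieszKernel, norm_sub_rev]

theorem rieszKernel_smul (c : ℝ) (l : EuclideanSpace ℝ (Fin d)) :
    rieszKernel d σ (c • l) = |c| ^ (σ - d) * rieszKernel d σ l := by
  simp only [rieszKernel, norm_smul, Real.norm_eq_abs,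
    Real.mul_rpow (abs_nonneg c) (norm_nonneg l)]
  ring

theorem rieszKernel_le_of_norm_le (hσ0 : 0 < σ) (hσd : σ < d) {x y : EuclideanSpace ℝ (Fin d)}
    (hx : 0 < ‖x‖) (hxy : ‖x‖ ≤ ‖y‖) : rieszKernel d σ y ≤ rieszKernel d σ x := by
  unfold rieszKernel
  exact mul_le_mul_of_nonneg_left (Real.rpow_le_rpow_of_nonpos hx hxy (by linarith))
    (rieszKernel_const_nonneg hσ0 hσd)

theorem locallyIntegrable_rieszKernel (hσ0 : 0 < σ) (hσd : σ < d) :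
    LocallyIntegrable (rieszKernel d σ) := by
  have hd : 1 ≤ d := by
    have : (0 : ℝ) < d := hσ0.trans hσd
    exact_mod_cast this
  refine locallyIntegrable_of_norm_le_rpow (C := Real.pi ^ (-(d : ℝ) / 2) * 2 ^ (-σ) *
      Real.Gamma (((d : ℝ) - σ) / 2) / Real.Gamma (σ / 2)) (α := d - σ)
    (by rwa [finrank_euclideanSpace_fin]) (by rw [finrank_euclideanSpace_fin]; linarith)
    (ae_of_all _ fun l => ?_) measurable_rieszKernel.aestronglyMeasurable
  rw [Real.norm_of_nonneg (rieszKernel_nonneg hσ0 hσd l), neg_sub]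
  rfl

theorem rieszKernel_sub_le_of_norm_lt (hσ0 : 0 < σ) (hσd : σ < d)
    {s l : EuclideanSpace ℝ (Fin d)} (h : ‖s‖ < ‖s - l‖) :
    rieszKernel d σ (s - l) ≤ 2⁻¹ ^ (σ - d) * rieszKernel d σ l := by
  have hl : ‖s - l‖ ≤ ‖s‖ + ‖l‖ := norm_sub_le s l
  have hls : ‖l‖ ≤ ‖s‖ + ‖s - l‖ := by simpa using norm_sub_le s (s - l)
  have hnorm : ‖(2⁻¹ : ℝ) • l‖ = 2⁻¹ * ‖l‖ := by simp [norm_smul]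
  calc rieszKernel d σ (s - l) ≤ rieszKernel d σ ((2⁻¹ : ℝ) • l) :=
        rieszKernel_le_of_norm_le hσ0 hσd (by rw [hnorm]; linarith) (by rw [hnorm]; linarith)
    _ = 2⁻¹ ^ (σ - d) * rieszKernel d σ l := by
        rw [rieszKernel_smul, abs_of_pos (by norm_num)]

theorem integrable_rieszKernel_sub_mul (hσ0 : 0 < σ) (hσd : σ < d)
    {w : EuclideanSpace ℝ (Fin d) → ℝ} (hw : Measurable w) (hw0 : ∀ l, 0 ≤ w l)
    (hw1 : ∀ l, w l ≤ 1) (hint : Integrable fun l => rieszKernel d σ l * w l)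
    (s : EuclideanSpace ℝ (Fin d)) :
    Integrable fun l => rieszKernel d σ (s - l) * w l := by
  have hφ := rieszKernel_nonneg hσ0 hσd
  have hnear : Integrable fun l => (Metric.closedBall 0 ‖s‖).indicator (rieszKernel d σ) (s - l) :=
    ((integrable_indicator_iff measurableSet_closedBall).2
      ((locallyIntegrable_rieszKernel hσ0 hσd).integrableOn_isCompact
        (isCompact_closedBall 0 _))).comp_sub_left s
  refine (hnear.add (hint.const_mul (2⁻¹ ^ (σ - d)))).mono'
    ((measurable_rieszKernel.comp (measurable_const.sub measurable_id)).mul hw).aestronglyMeasurable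
    (ae_of_all _ fun l => ?_)
  rw [Real.norm_of_nonneg (mul_nonneg (hφ _) (hw0 l)), Pi.add_apply]
  by_cases hsl : ‖s - l‖ ≤ ‖s‖
  · rw [Set.indicator_of_mem (mem_closedBall_zero_iff.2 hsl)]
    calc rieszKernel d σ (s - l) * w l ≤ rieszKernel d σ (s - l) :=
          mul_le_of_le_one_right (hφ _) (hw1 l)
      _ ≤ _ := le_add_of_nonneg_right (mul_nonneg (by positivity) (mul_nonneg (hφ l) (hw0 l)))
  · rw [Set.indicator_of_notMem (mt mem_closedBall_zero_iff.1 hsl), zero_add, ← mul_assoc]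
    exact mul_le_mul_of_nonneg_right
      (rieszKernel_sub_le_of_norm_lt hσ0 hσd (not_le.1 hsl)) (hw0 l)

theorem lintegral_rieszKernel_mul_comp_add_le (hσ0 : 0 < σ) (hσd : σ < d)
    {w : EuclideanSpace ℝ (Fin d) → ℝ} (hw : Measurable w) (hw0 : ∀ l, 0 ≤ w l)
    (hw1 : ∀ l, w l ≤ 1) (hint : Integrable fun l => rieszKernel d σ l * w l)
    (hconv : ∀ s, ∫ l, rieszKernel d σ (s - l) * w l ≤ ∫ l, rieszKernel d σ l * w l)
    (s : EuclideanSpace ℝ (Fin d)) :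
    ∫⁻ x, ENNReal.ofReal (rieszKernel d σ x) * ENNReal.ofReal (w (s + x)) ≤
      ENNReal.ofReal (∫ l, rieszKernel d σ l * w l) := by
  have hφ := rieszKernel_nonneg hσ0 hσd
  calc ∫⁻ x, ENNReal.ofReal (rieszKernel d σ x) * ENNReal.ofReal (w (s + x))
      = ∫⁻ l, ENNReal.ofReal (rieszKernel d σ (s - l) * w l) := by
        rw [← lintegral_sub_right_eq_self _ s]
        congr with l
        rw [ENNReal.ofReal_mul (hφ _), rieszKernel_sub_comm, add_sub_cancel]
    _ = ENNReal.ofReal (∫ l, rieszKernel d σ (s - l) * w l) :=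
        (ofReal_integral_eq_lintegral_ofReal
          (integrable_rieszKernel_sub_mul hσ0 hσd hw hw0 hw1 hint s)
          (ae_of_all _ fun l => mul_nonneg (hφ _) (hw0 l))).symm
    _ ≤ ENNReal.ofReal (∫ l, rieszKernel d σ l * w l) := ENNReal.ofReal_le_ofReal (hconv s)

end RieszKernel

theorem stmt_15_general (d : ℕ) (σ : ℝ) (hσ0 : 0 < σ) (hσd : σ < d)
    (p : ℕ) (hp : 1 ≤ p)
    (Q : EuclideanSpace ℝ (Fin d) → ℝ) (hQm : Measurable Q)
    (hQ0 : ∀ x, 0 < Q x) (hQ1 : ∀ x, Q x ≤ 1)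
    (hQint : Integrable (fun l => rieszKernel d σ l * Q l ^ p))
    (hconv : ∀ l' : EuclideanSpace ℝ (Fin d),
      ∫ l, rieszKernel d σ (l' - l) * Q l ^ p ≤ ∫ l, rieszKernel d σ l * Q l ^ p) :
    ∀ n : ℕ, 1 ≤ n →
      ∫ x : Fin n → EuclideanSpace ℝ (Fin d),
          (∑ π : Equiv.Perm (Fin n), ∏ k, Q (∑ j ∈ Finset.Iic k, x (π j))) ^ p *
            ∏ i, rieszKernel d σ (x i) ≤
        (n.factorial : ℝ) ^ p * (∫ l, rieszKernel d σ l * Q l ^ p) ^ n := by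
  intro n _
  have hQ (l) : 0 ≤ Q l := (hQ0 l).le
  have hI : 0 ≤ ∫ l, rieszKernel d σ l * Q l ^ p :=
    integral_nonneg fun l => mul_nonneg (rieszKernel_nonneg hσ0 hσd l) (pow_nonneg (hQ l) p)
  have hconv_lintegral (s) :
      ∫⁻ x, ENNReal.ofReal (rieszKernel d σ x) * ENNReal.ofReal (Q (s + x)) ^ p ≤
        ENNReal.ofReal (∫ l, rieszKernel d σ l * Q l ^ p) := by
    simpa only [ENNReal.ofReal_pow (hQ _)] using lintegral_rieszKernel_mul_comp_add_le hσ0 hσd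
      (hQm.pow_const p) (fun l => pow_nonneg (hQ l) p) (fun l => pow_le_one₀ (hQ l) (hQ1 l))
      hQint hconv s
  exact integral_sum_perm_pow_le measurable_rieszKernel hQm (rieszKernel_nonneg hσ0 hσd) hQ hp hI
    hconv_lintegral n

theorem stmt_15 (d : ℕ) (hd : 0 < d) (σ : ℝ) (hσ0 : 0 < σ) (hσd : σ < d)
    (p : ℕ) (hp : 1 ≤ p)
    (Q : EuclideanSpace ℝ (Fin d) → ℝ) (hQm : Measurable Q)
    (hQ0 : ∀ x, 0 < Q x) (hQ1 : ∀ x, Q x ≤ 1)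
    (hQint : Integrable (fun l => rieszKernel d σ l * Q l ^ p))
    (hconv : ∀ l' : EuclideanSpace ℝ (Fin d),
      ∫ l, rieszKernel d σ (l' - l) * Q l ^ p ≤ ∫ l, rieszKernel d σ l * Q l ^ p) :
    ∀ n : ℕ, 1 ≤ n →
      ∫ x : Fin n → EuclideanSpace ℝ (Fin d),
          (∑ π : Equiv.Perm (Fin n), ∏ k, Q (∑ j ∈ Finset.Iic k, x (π j))) ^ p *
            ∏ i, rieszKernel d σ (x i) ≤
        (n.factorial : ℝ) ^ p * (∫ l, rieszKernel d σ l * Q l ^ p) ^ n :=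
  stmt_15_general d σ hσ0 hσd p hp Q hQm hQ0 hQ1 hQint hconv
end
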